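/- The map T : 𝔻 × 𝔻 → 𝔻 × 𝔻 defined by T(x,y) = (M(x,y), φ_{M(x,y)}(x)) is a bijection of 𝔻 × 𝔻 onto itself, with inverse given by T^{-1}(m,u) = (φ_m(u), φ_m(−u)). -/

import Mathlib

/-- The open unit disc in the complex plane. -/
def Disc : Set ℂ := {z : ℂ | ‖z‖ < 1}

/-- The geodesic symmetry `φ_a(z) = (a - z)/(1 - conj(a)·z)`. -/
noncomputable def phi (a z : ℂ) : ℂ := (a - z) / (1 - (starRingEnd ℂ) a * z)

/-!
Each `φ_m` is an involution of `𝔻`, so both inverse relations reduce to the uniqueness of the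
midpoint. For that, transport by `φ_a`: the map `φ_{φ_a(b)} ∘ φ_a` is `φ_b` followed by a
rotation, so if `a` and `b` are both midpoints of `x, y`, then `c = φ_a(b)` is a midpoint of
`u = φ_a(x)` and `-u`. The midpoint equation then reads `c = conj(c)·u²`, which forces `c = 0`
because `|u| < 1`, i.e. `b = φ_a(0) = a`.
-/

open ComplexConjugate

lemma one_sub_conj_mul_ne_zero {a z : ℂ} (ha : a ∈ Disc) (hz : z ∈ Disc) :
    1 - conj a * z ≠ 0 := by
  intro h
  have hlt : ‖conj a * z‖ < 1 := by
    rw [norm_mul, Complex.norm_conj]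
    exact mul_lt_one_of_nonneg_of_lt_one_left (norm_nonneg a) ha hz.le
  rw [← sub_eq_zero.1 h, norm_one] at hlt
  exact hlt.false

lemma one_sub_mul_conj_ne_zero {a z : ℂ} (ha : a ∈ Disc) (hz : z ∈ Disc) :
    1 - a * conj z ≠ 0 := by
  simpa only [mul_comm] using one_sub_conj_mul_ne_zero hz ha

lemma normSq_one_sub_conj_mul_sub_normSq_sub (a z : ℂ) :
    Complex.normSq (1 - conj a * z) - Complex.normSq (a - z)
      = (1 - Complex.normSq a) * (1 - Complex.normSq z) := by
  simp only [Complex.normSq_apply, Complex.mul_re, Complex.mul_im, Complex.sub_re,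
    Complex.sub_im, Complex.one_re, Complex.one_im, Complex.conj_re, Complex.conj_im]
  ring

lemma norm_sub_lt_norm_one_sub_conj_mul {a z : ℂ} (ha : a ∈ Disc) (hz : z ∈ Disc) :
    ‖a - z‖ < ‖1 - conj a * z‖ := by
  have ha' : ‖a‖ ^ 2 < 1 := pow_lt_one₀ (norm_nonneg a) ha two_ne_zero
  have hz' : ‖z‖ ^ 2 < 1 := pow_lt_one₀ (norm_nonneg z) hz two_ne_zero
  have key := normSq_one_sub_conj_mul_sub_normSq_sub a z
  simp only [Complex.normSq_eq_norm_sq] at key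
  rw [← sq_lt_sq₀ (norm_nonneg _) (norm_nonneg _)]
  nlinarith

lemma phi_mem {a z : ℂ} (ha : a ∈ Disc) (hz : z ∈ Disc) : phi a z ∈ Disc := by
  show ‖phi a z‖ < 1
  rw [phi, norm_div]
  exact (div_lt_one ((norm_nonneg _).trans_lt (norm_sub_lt_norm_one_sub_conj_mul ha hz))).2
    (norm_sub_lt_norm_one_sub_conj_mul ha hz)

@[simp] lemma phi_zero (a : ℂ) : phi a 0 = a := by simp [phi]

lemma phi_phi {a z : ℂ} (ha : a ∈ Disc) (hz : z ∈ Disc) : phi a (phi a z) = z := by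
  have h1 := one_sub_conj_mul_ne_zero ha hz
  have hw := one_sub_conj_mul_ne_zero ha (phi_mem ha hz)
  have hdef : phi a z * (1 - conj a * z) = a - z := div_mul_cancel₀ _ h1
  rw [phi, div_eq_iff hw]
  linear_combination -hdef

lemma phi_sub_phi {a b z : ℂ} (ha : a ∈ Disc) (hb : b ∈ Disc) (hz : z ∈ Disc) :
    phi a b - phi a z = (1 - conj a * a) * (z - b) / ((1 - conj a * b) * (1 - conj a * z)) := by
  have hab := one_sub_conj_mul_ne_zero ha hb
  have haz := one_sub_conj_mul_ne_zero ha hz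
  rw [phi, phi, div_sub_div _ _ hab haz]
  ring

lemma one_sub_conj_phi_mul_phi {a b z : ℂ} (ha : a ∈ Disc) (hb : b ∈ Disc) (hz : z ∈ Disc) :
    1 - conj (phi a b) * phi a z
      = (1 - conj a * a) * (1 - conj b * z) / ((1 - a * conj b) * (1 - conj a * z)) := by
  have hab := one_sub_mul_conj_ne_zero ha hb
  have haz := one_sub_conj_mul_ne_zero ha hz
  unfold phi
  simp only [map_div₀, map_sub, map_one, map_mul, Complex.conj_conj]
  rw [div_mul_div_comm, one_sub_div (mul_ne_zero hab haz)]
  ring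

lemma phi_phi_phi {a b z : ℂ} (ha : a ∈ Disc) (hb : b ∈ Disc) (hz : z ∈ Disc) :
    phi (phi a b) (phi a z) = -((1 - a * conj b) / (1 - conj a * b)) * phi b z := by
  have haa := one_sub_conj_mul_ne_zero ha ha
  have haz := one_sub_conj_mul_ne_zero ha hz
  rw [phi, phi_sub_phi ha hb hz, one_sub_conj_phi_mul_phi ha hb hz, phi]
  field_simp
  ring

lemma neg_mem_disc {z : ℂ} (hz : z ∈ Disc) : -z ∈ Disc := by
  simpa [Disc] using hz

lemma eq_zero_of_phi_eq_neg_phi_neg {c u : ℂ} (hc : c ∈ Disc) (hu : u ∈ Disc)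
    (h : phi c u = -phi c (-u)) : c = 0 := by
  have hd := one_sub_conj_mul_ne_zero hc hu
  have hd' := one_sub_conj_mul_ne_zero hc (neg_mem_disc hu)
  rw [phi, phi, neg_div', div_eq_div_iff hd hd'] at h
  have hfix : c = conj c * u ^ 2 := by linear_combination h / 2
  have hnorm : ‖c‖ = ‖c‖ * ‖u‖ ^ 2 := by
    conv_lhs => rw [hfix]
    rw [norm_mul, norm_pow, Complex.norm_conj]
  have hu2 : ‖u‖ ^ 2 < 1 := pow_lt_one₀ (norm_nonneg u) hu two_ne_zero
  by_contra hc0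
  nlinarith [norm_pos_iff.2 hc0]

lemma eq_of_phi_eq_neg_phi {a b x y : ℂ} (ha : a ∈ Disc) (hb : b ∈ Disc) (hx : x ∈ Disc)
    (hy : y ∈ Disc) (hxya : phi a x = -phi a y) (hxyb : phi b x = -phi b y) : b = a := by
  have hya : phi a y = -phi a x := by rw [hxya, neg_neg]
  have hsymm : phi (phi a b) (phi a x) = -phi (phi a b) (-phi a x) := by
    rw [← hya, phi_phi_phi ha hb hx, phi_phi_phi ha hb hy, hxyb]
    ring
  have hc := eq_zero_of_phi_eq_neg_phi_neg (phi_mem ha hb) (phi_mem ha hx) hsymm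
  rw [← phi_phi ha hb, hc, phi_zero]

/-- The map `T(x,y) = (M(x,y), φ_{M(x,y)}(x))` is a bijection of
`𝔻 × 𝔻` onto itself, with inverse `(m,u) ↦ (φ_m(u), φ_m(-u))`, where `M` denotes the
geodesic midpoint map. -/
theorem stmt12 (M : ℂ → ℂ → ℂ)
    (hM : ∀ x ∈ Disc, ∀ y ∈ Disc, M x y ∈ Disc ∧ phi (M x y) x = -(phi (M x y) y)) :
    Set.BijOn (fun p : ℂ × ℂ => (M p.1 p.2, phi (M p.1 p.2) p.1))
        (Disc ×ˢ Disc) (Disc ×ˢ Disc) ∧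
      Set.InvOn (fun q : ℂ × ℂ => (phi q.1 q.2, phi q.1 (-q.2)))
        (fun p : ℂ × ℂ => (M p.1 p.2, phi (M p.1 p.2) p.1))
        (Disc ×ˢ Disc) (Disc ×ˢ Disc) := by
  have hmaps : Set.MapsTo (fun p : ℂ × ℂ => (M p.1 p.2, phi (M p.1 p.2) p.1))
      (Disc ×ˢ Disc) (Disc ×ˢ Disc) := by
    rintro ⟨x, y⟩ ⟨hx, hy⟩
    exact ⟨(hM x hx y hy).1, phi_mem (hM x hx y hy).1 hx⟩
  have hmaps' : Set.MapsTo (fun q : ℂ × ℂ => (phi q.1 q.2, phi q.1 (-q.2)))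
      (Disc ×ˢ Disc) (Disc ×ˢ Disc) := by
    rintro ⟨m, u⟩ ⟨hm, hu⟩
    exact ⟨phi_mem hm hu, phi_mem hm (neg_mem_disc hu)⟩
  have hinv : Set.InvOn (fun q : ℂ × ℂ => (phi q.1 q.2, phi q.1 (-q.2)))
      (fun p : ℂ × ℂ => (M p.1 p.2, phi (M p.1 p.2) p.1)) (Disc ×ˢ Disc) (Disc ×ˢ Disc) := by
    constructor
    · rintro ⟨x, y⟩ ⟨hx, hy⟩
      obtain ⟨hm, hmid⟩ := hM x hx y hy
      refine Prod.ext (phi_phi hm hx) ?_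
      change phi (M x y) (-phi (M x y) x) = y
      rw [hmid, neg_neg, phi_phi hm hy]
    · rintro ⟨m, u⟩ ⟨hm, hu⟩
      have hx := phi_mem hm hu
      have hy := phi_mem hm (neg_mem_disc hu)
      obtain ⟨hM', hmid⟩ := hM _ hx _ hy
      have hmid' : phi m (phi m u) = -phi m (phi m (-u)) := by
        rw [phi_phi hm hu, phi_phi hm (neg_mem_disc hu), neg_neg]
      have hMm := eq_of_phi_eq_neg_phi hm hM' hx hy hmid' hmid
      simp only [hMm, phi_phi hm hu]
  exact ⟨hinv.bijOn hmaps hmaps', hinv⟩
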